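/- Let b_0, …, b_n be positive integers, let N = b_0·b_1·⋯·b_n, and let K be the commutative ring that is free as an abelian group on γ_0, …, γ_n with multiplication γ_k·γ_m = (ℓ_k·ℓ_m/ℓ_{k+m}) γ_{k+m} for k + m ≤ n and γ_k·γ_m = 0 for k + m > n (unit γ_0). Then the ℤ-linear map K → ℤ[u]/⟨N·u^{n+1}⟩ sending γ_k ↦ ℓ_k·u^k for 0 ≤ k ≤ n is an injective ring homomorphism. (This is the natural map from Kawasaki's cohomology ring of the coarse moduli space ℂP^n_{(b)} to the cohomology ring of the orbifold [ℂP^n_{(b)}], determined by γ_1 ↦ ℓ_1·u = lcm(b_0,…,b_n)·u.) -/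

import Mathlib

/-!
For `#A ≤ k ≤ n` the product `∏_{i ∈ A} b_i` divides `ℓ_k`: enlarge `A` to a set `A'` of size `k`
and add one more index `j`; the term of `ℓ_k` indexed by `A' ∪ {j}` is
`(b_j / gcd) · ∏_{A'} b`. Splitting a set `T` with `#T ≤ k + m` into pieces of sizes `≤ k` and
`≤ m` then gives `∏_T b ∣ ℓ_k ℓ_m`. For `T = {0, …, n}` this is `N ∣ ℓ_k ℓ_m` when `k + m > n`;
for the sets `S ∖ {i}` with `#S = k + m + 1` it gives `ℓ_{k+m} ∣ ℓ_k ℓ_m`, since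
`∏_S b / gcd_S b` divides every common multiple of the `∏_{S ∖ {i}} b`.
So the classes of `ℓ_k u^k` multiply with Kawasaki's structure constants, and they are
`ℤ`-linearly independent because `ℓ_k ≠ 0` and the ideal contains no nonzero polynomial of
degree `≤ n`.
-/

open Polynomial

/-- `ell b k` is the number `ℓ_k` of Kawasaki: the least common multiple, over all
`(k+1)`-element subsets `{i_0 < ⋯ < i_k}` of `{0, …, n}`, of
`b_{i_0} ⋯ b_{i_k} / gcd(b_{i_0}, …, b_{i_k})`.  Note `ell b 0 = 1`. -/
def ell {n : ℕ} (b : Fin (n + 1) → ℕ) (k : ℕ) : ℕ :=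
  ((Finset.univ : Finset (Fin (n + 1))).powersetCard (k + 1)).lcm
    (fun s => (∏ i ∈ s, b i) / s.gcd b)

/-- Kawasaki's multiplication on the free abelian group `ℤ^{n+1}` with basis
`γ_0, …, γ_n`: `γ_k · γ_m = (ℓ_k ℓ_m / ℓ_{k+m}) γ_{k+m}` when `k + m ≤ n`,
and `γ_k · γ_m = 0` when `k + m > n`. -/
def kawasakiMul {n : ℕ} (b : Fin (n + 1) → ℕ) (x y : Fin (n + 1) → ℤ) :
    Fin (n + 1) → ℤ := fun j =>
  ∑ k : Fin (n + 1), ∑ m : Fin (n + 1),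
    if (k : ℕ) + (m : ℕ) = (j : ℕ) then
      x k * y m * ((ell b k * ell b m) / ell b (k + m) : ℕ)
    else 0

open Finset

theorem Finset.gcd_dvd_prod {ι α : Type*} [CommMonoidWithZero α] [NormalizedGCDMonoid α]
    {s : Finset ι} {f : ι → α} (hs : s.Nonempty) : s.gcd f ∣ ∏ i ∈ s, f i := by
  obtain ⟨i, hi⟩ := hs
  exact (gcd_dvd hi).trans (dvd_prod_of_mem f hi)

section GcdOfProducts

variable {ι : Type*} {s : Finset ι} {b : ι → ℕ}

theorem Finset.gcd_pos (hb : ∀ i ∈ s, 0 < b i) (hs : s.Nonempty) : 0 < s.gcd b := by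
  obtain ⟨i, hi⟩ := hs
  exact Nat.pos_of_ne_zero fun h => (hb i hi).ne' (gcd_eq_zero_iff.mp h i hi)

theorem Finset.prod_div_gcd_pos (hb : ∀ i ∈ s, 0 < b i) (hs : s.Nonempty) :
    0 < (∏ i ∈ s, b i) / s.gcd b :=
  Nat.div_pos (Nat.le_of_dvd (prod_pos hb) (gcd_dvd_prod hs)) (gcd_pos hb hs)

theorem Finset.prod_div_gcd_dvd_of_forall_prod_erase_dvd [DecidableEq ι] {L : ℕ}
    (hb : ∀ i ∈ s, 0 < b i) (hs : s.Nonempty) (h : ∀ i ∈ s, ∏ j ∈ s.erase i, b j ∣ L) :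
    (∏ i ∈ s, b i) / s.gcd b ∣ L := by
  have hprod : ∏ i ∈ s, b i ∣ s.gcd fun i => b i * L := by
    refine dvd_gcd fun i hi => ?_
    rw [← mul_prod_erase s b hi]
    exact mul_dvd_mul_left _ (h i hi)
  rw [gcd_mul_right, normalize_eq] at hprod
  rw [← Nat.mul_dvd_mul_iff_left (gcd_pos hb hs), Nat.mul_div_cancel' (gcd_dvd_prod hs)]
  exact hprod

end GcdOfProducts

section Ell

variable {n : ℕ} {b : Fin (n + 1) → ℕ}

theorem ell_pos (hb : ∀ i, 0 < b i) (k : ℕ) : 0 < ell b k := by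
  refine Nat.pos_of_ne_zero fun h => ?_
  obtain ⟨s, hs, hs0⟩ := lcm_eq_zero_iff.mp h
  have hne : s.Nonempty := card_pos.mp (by rw [(mem_powersetCard.mp hs).2]; omega)
  exact (prod_div_gcd_pos (fun i _ => hb i) hne).ne' hs0

theorem ell_zero (hb : ∀ i, 0 < b i) : ell b 0 = 1 := by
  refine Nat.dvd_one.mp (lcm_dvd fun s hs => ?_)
  obtain ⟨i, rfl⟩ := card_eq_one.mp (mem_powersetCard.mp hs).2
  simp [Nat.div_self (hb i)]

theorem prod_dvd_ell_of_card_le {A : Finset (Fin (n + 1))} {k : ℕ} (hA : #A ≤ k) (hk : k ≤ n) :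
    ∏ i ∈ A, b i ∣ ell b k := by
  obtain ⟨A', hAA', hA'⟩ := exists_superset_card_eq hA (by rw [Fintype.card_fin]; omega)
  obtain ⟨j, -, hj⟩ := exists_mem_notMem_of_card_lt_card (s := A') (t := univ) (by rw [card_fin]; omega)
  have hmem : insert j A' ∈ (univ : Finset (Fin (n + 1))).powersetCard (k + 1) :=
    mem_powersetCard.mpr ⟨subset_univ _, by rw [card_insert_of_notMem hj, hA']⟩
  have hterm : ∏ i ∈ A', b i ∣ (∏ i ∈ insert j A', b i) / (insert j A').gcd b := by
    rw [prod_insert hj, mul_comm, Nat.mul_div_assoc _ (gcd_dvd (mem_insert_self j A'))]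
    exact dvd_mul_right _ _
  exact (prod_dvd_prod_of_subset A A' b hAA').trans (hterm.trans (dvd_lcm hmem))

theorem prod_dvd_ell_mul_ell {T : Finset (Fin (n + 1))} {k m : ℕ} (hT : #T ≤ k + m)
    (hk : k ≤ n) (hm : m ≤ n) : ∏ i ∈ T, b i ∣ ell b k * ell b m := by
  obtain ⟨A, hAT, hA⟩ := exists_subset_card_eq (min_le_right k #T)
  have hB : #(T \ A) ≤ m := by rw [card_sdiff_of_subset hAT]; omega
  rw [← prod_sdiff hAT, mul_comm]
  exact mul_dvd_mul (prod_dvd_ell_of_card_le (by omega) hk) (prod_dvd_ell_of_card_le hB hm)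

theorem ell_add_dvd_mul (hb : ∀ i, 0 < b i) {k m : ℕ} (hkm : k + m ≤ n) :
    ell b (k + m) ∣ ell b k * ell b m := by
  refine lcm_dvd fun S hS => ?_
  have hScard : #S = k + m + 1 := (mem_powersetCard.mp hS).2
  refine prod_div_gcd_dvd_of_forall_prod_erase_dvd (fun i _ => hb i)
    (card_pos.mp (by omega)) fun i hi => prod_dvd_ell_mul_ell ?_ (by omega) (by omega)
  rw [card_erase_of_mem hi]
  omega

end Ell

section OrbifoldMap

variable {n : ℕ} (b : Fin (n + 1) → ℕ) (N : ℤ)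

noncomputable def gammaImage (k : ℕ) : ℤ[X] ⧸ Ideal.span {C N * X ^ (n + 1)} :=
  Ideal.Quotient.mk _ (C (ell b k : ℤ) * X ^ k)

theorem gammaImage_mul_gammaImage_eq_mk (k m : ℕ) :
    gammaImage b N k * gammaImage b N m =
      Ideal.Quotient.mk _ (C ((ell b k * ell b m : ℕ) : ℤ) * X ^ (k + m)) := by
  rw [gammaImage, gammaImage, ← map_mul, Nat.cast_mul, C_mul]
  congr 1
  ring

theorem linearIndependent_gammaImage (hb : ∀ i, 0 < b i) :
    LinearIndependent ℤ fun k : Fin (n + 1) => gammaImage b N k := by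
  refine Fintype.linearIndependent_iff.mpr fun g hg k => ?_
  set I := Ideal.span {C N * X ^ (n + 1)}
  set p : ℤ[X] := ∑ j : Fin (n + 1), C (g j * ell b j) * X ^ (j : ℕ)
  have hp : Ideal.Quotient.mk I p = 0 := by
    rw [← hg, map_sum]
    refine sum_congr rfl fun j _ => ?_
    rw [gammaImage, zsmul_eq_mul, ← map_intCast (Ideal.Quotient.mk I), ← map_mul, C_mul,
      mul_assoc]
    rfl
  rw [Ideal.Quotient.eq_zero_iff_mem, Ideal.mem_span_singleton] at hp
  have hcoeff := X_pow_dvd_iff.mp ((dvd_mul_left _ _).trans hp) k k.isLt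
  simp only [p, finsetSum_coeff, coeff_C_mul_X_pow, Fin.val_inj, sum_ite_eq, mem_univ,
    if_true] at hcoeff
  exact (mul_eq_zero.mp hcoeff).resolve_right (by exact_mod_cast (ell_pos hb k).ne')

theorem gammaImage_mul_gammaImage_of_add_le (hb : ∀ i, 0 < b i) {k m : ℕ} (hkm : k + m ≤ n) :
    gammaImage b N k * gammaImage b N m =
      ((ell b k * ell b m / ell b (k + m) : ℕ) : ℤ) • gammaImage b N (k + m) := by
  obtain ⟨c, hc⟩ := ell_add_dvd_mul hb hkm
  rw [gammaImage_mul_gammaImage_eq_mk, hc, Nat.mul_div_cancel_left _ (ell_pos hb _), gammaImage,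
    ← map_zsmul]
  congr 1
  simp only [zsmul_eq_mul, Nat.cast_mul, Int.cast_natCast, map_mul, map_natCast]
  ring

theorem gammaImage_mul_gammaImage_of_lt_add {k m : ℕ} (hk : k ≤ n) (hm : m ≤ n)
    (hkm : n < k + m) :
    gammaImage b ((∏ i, b i : ℕ) : ℤ) k * gammaImage b ((∏ i, b i : ℕ) : ℤ) m = 0 := by
  obtain ⟨c, hc⟩ := prod_dvd_ell_mul_ell (T := univ) (by rw [card_fin]; omega) hk hm
  rw [gammaImage_mul_gammaImage_eq_mk, Ideal.Quotient.eq_zero_iff_mem, Ideal.mem_span_singleton]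
  refine ⟨C (c : ℤ) * X ^ (k + m - (n + 1)), ?_⟩
  have hX : (X : ℤ[X]) ^ (k + m) = X ^ (n + 1) * X ^ (k + m - (n + 1)) := by
    rw [← pow_add, Nat.add_sub_of_le hkm]
  rw [hc, hX]
  simp only [Nat.cast_mul, map_mul]
  ring

theorem gammaImage_zero (hb : ∀ i, 0 < b i) : gammaImage b N 0 = 1 := by
  rw [gammaImage, ell_zero hb]
  simp

variable {b}

theorem gammaImage_mul_gammaImage (hb : ∀ i, 0 < b i) (k m : Fin (n + 1)) :
    gammaImage b (∏ i, b i : ℕ) k * gammaImage b (∏ i, b i : ℕ) m =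
      ∑ j : Fin (n + 1), (if (k : ℕ) + m = j then
        ((ell b k * ell b m / ell b (k + m) : ℕ) : ℤ) else 0) • gammaImage b (∏ i, b i : ℕ) j := by
  by_cases hkm : (k : ℕ) + m ≤ n
  · rw [gammaImage_mul_gammaImage_of_add_le b _ hb hkm, sum_eq_single ⟨k + m, by omega⟩]
    · simp
    · intro j _ hj
      rw [if_neg fun h => hj (Fin.ext h.symm), zero_smul]
    · simp
  · rw [gammaImage_mul_gammaImage_of_lt_add b (by omega) (by omega) (by omega)]
    refine (sum_eq_zero fun j _ => ?_).symm
    rw [if_neg (by omega), zero_smul]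

theorem sum_kawasakiMul_smul_gammaImage (hb : ∀ i, 0 < b i) (x y : Fin (n + 1) → ℤ) :
    ∑ j, kawasakiMul b x y j • gammaImage b (∏ i, b i : ℕ) j =
      (∑ k, x k • gammaImage b (∏ i, b i : ℕ) k) * ∑ m, y m • gammaImage b (∏ i, b i : ℕ) m := by
  simp only [kawasakiMul, sum_smul, sum_mul_sum, smul_mul_smul_comm, gammaImage_mul_gammaImage hb,
    smul_sum, smul_smul, mul_ite, mul_zero]
  rw [sum_comm]
  exact sum_congr rfl fun _ _ => sum_comm

end OrbifoldMap

/-- with `N = b_0 ⋯ b_n`, the ℤ-linear map from Kawasaki's ring `K`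
(free on `γ_0, …, γ_n` with the product above, unit `γ_0`) to
`ℤ[u]/⟨N u^{n+1}⟩` sending `γ_k ↦ ℓ_k u^k` is an injective ring homomorphism. -/
theorem kawasaki_to_orbifold_injective_ringHom {n : ℕ} (b : Fin (n + 1) → ℕ)
    (hb : ∀ i, 0 < b i) :
    ∀ I : Ideal (Polynomial ℤ),
      I = Ideal.span {Polynomial.C ((∏ i, b i : ℕ) : ℤ) * Polynomial.X ^ (n + 1)} →
    ∀ φ : (Fin (n + 1) → ℤ) → Polynomial ℤ ⧸ I,
      (φ = fun x => ∑ k : Fin (n + 1),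
        x k • Ideal.Quotient.mk I
          (Polynomial.C ((ell b k : ℕ) : ℤ) * Polynomial.X ^ (k : ℕ))) →
    Function.Injective φ ∧
    (∀ x y, φ (x + y) = φ x + φ y) ∧
    (∀ x y, φ (kawasakiMul b x y) = φ x * φ y) ∧
    φ (Pi.single 0 1) = 1 := by
  rintro I rfl φ rfl
  refine ⟨fun x y hxy => funext ((linearIndependent_gammaImage b _ hb).eq_coords_of_eq hxy),
    fun x y => ?_, sum_kawasakiMul_smul_gammaImage hb, ?_⟩
  · simp only [Pi.add_apply, add_smul, sum_add_distrib]
  · simp only [Pi.single_apply, ite_smul, one_smul, zero_smul, sum_ite_eq', mem_univ, if_true]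
    exact gammaImage_zero b _ hb
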